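/- The Thomas–Fermi energy obeys the scaling law E_TF(Z) = E_TF(1) · Z^{7/3} for all Z > 0, where if ρ minimizes (or is admissible for) the functional at Z = 1, then ρ_Z(x) := Z² ρ(Z^{1/3} x) is admissible at Z and 𝓔_TF^Z(ρ_Z) = Z^{7/3} 𝓔_TF^1(ρ). -/

import Mathlib

open MeasureTheory

/-- The Coulomb scalar product `D(ρ,σ) = (1/2)∬ ρ(x)σ(y)|x−y|⁻¹ dx dy`. -/
noncomputable def coulombD (ρ σ : EuclideanSpace ℝ (Fin 3) → ℝ) : ℝ :=
  (1 / 2) * ∫ x, ∫ y, ρ x * σ y / ‖x - y‖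

/-- The Thomas–Fermi functional with coefficient `γ` and nuclear charge `Z`. -/
noncomputable def tfFunctional (γ Z : ℝ) (ρ : EuclideanSpace ℝ (Fin 3) → ℝ) : ℝ :=
  (∫ x, ((3 / 5) * γ * ρ x ^ ((5 : ℝ) / 3) - Z / ‖x‖ * ρ x)) + coulombD ρ ρ

/-- Admissible densities: nonnegative and in `L¹ ∩ L^{5/3}`. -/
def TFAdmissible (ρ : EuclideanSpace ℝ (Fin 3) → ℝ) : Prop :=
  (∀ x, 0 ≤ ρ x) ∧ Integrable ρ ∧ MemLp ρ (5 / 3)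

/-- The Thomas–Fermi ground-state energy. -/
noncomputable def tfEnergy (γ Z : ℝ) : ℝ :=
  sInf (tfFunctional γ Z '' {ρ | TFAdmissible ρ})

/-!
With `Z = c³`, the dilation `ρ ↦ c⁶ ρ(c ·)` multiplies each of the three terms of the
Thomas–Fermi functional by `c⁷`: the kinetic term picks up `(c⁶)^{5/3} c⁻³`, the attraction
`c³ c⁶ c c⁻³`, and the Coulomb term `c¹² c c⁻⁶`. Since the dilation is a bijection of the
admissible densities, the infima scale by the same factor.
-/

theorem MeasureTheory.MemLp.comp_smul {E F : Type*} [NormedAddCommGroup E] [NormedSpace ℝ E]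
    [MeasurableSpace E] [BorelSpace E] [FiniteDimensional ℝ E] {μ : Measure E}
    [μ.IsAddHaarMeasure] [NormedAddCommGroup F] {p : ENNReal} {f : E → F} (hf : MemLp f p μ)
    {c : ℝ} (hc : c ≠ 0) : MemLp (fun x => f (c • x)) p μ := by
  let dilation : E ≃ᵐ E := (Homeomorph.smul (isUnit_iff_ne_zero.2 hc).unit).toMeasurableEquiv
  refine (dilation.memLp_map_measure_iff).1 ?_
  change MemLp f p (Measure.map (c • ·) μ)
  rw [Measure.map_addHaar_smul μ hc]
  exact hf.smul_measure ENNReal.ofReal_ne_top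

open scoped Pointwise

local notation "ℝ³" => EuclideanSpace ℝ (Fin 3)

lemma integral_comp_smul_euclideanSpace {f : ℝ³ → ℝ} {c : ℝ} (hc : 0 ≤ c) :
    ∫ x, f (c • x) = (c ^ 3)⁻¹ * ∫ x, f x := by
  rw [Measure.integral_comp_smul_of_nonneg volume f c (hR := hc), finrank_euclideanSpace_fin,
    smul_eq_mul]

lemma coulombD_const_mul (a b : ℝ) (ρ σ : ℝ³ → ℝ) :
    coulombD (fun x => a * ρ x) (fun y => b * σ y) = a * b * coulombD ρ σ := by
  have hpoint : ∀ x y : ℝ³, a * ρ x * (b * σ y) / ‖x - y‖ = a * b * (ρ x * σ y / ‖x - y‖) :=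
    fun x y => by ring
  simp only [coulombD, hpoint, integral_const_mul]
  ring

lemma coulombD_comp_smul {c : ℝ} (hc : 0 < c) (ρ σ : ℝ³ → ℝ) :
    coulombD (fun x => ρ (c • x)) (fun y => σ (c • y)) = (c ^ 5)⁻¹ * coulombD ρ σ := by
  have hdist : ∀ x y : ℝ³, ‖x - y‖ = c⁻¹ * ‖c • x - c • y‖ := fun x y => by
    rw [← smul_sub, norm_smul, Real.norm_of_nonneg hc.le, inv_mul_cancel_left₀ hc.ne']
  have hpoint : ∀ x y : ℝ³, ρ (c • x) * σ (c • y) / ‖x - y‖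
      = c * (ρ (c • x) * σ (c • y) / ‖c • x - c • y‖) := fun x y => by
    rw [hdist, div_eq_mul_inv, div_eq_mul_inv, mul_inv, inv_inv]
    ring
  have hinner : ∀ x : ℝ³, ∫ y, ρ (c • x) * σ (c • y) / ‖x - y‖
      = c * ((c ^ 3)⁻¹ * ∫ y, ρ (c • x) * σ y / ‖c • x - y‖) := fun x => by
    simp only [hpoint, integral_const_mul,
      integral_comp_smul_euclideanSpace (f := fun y => ρ (c • x) * σ y / ‖c • x - y‖) hc.le]
  simp only [coulombD, hinner, integral_const_mul,
    integral_comp_smul_euclideanSpace (f := fun x => ∫ y, ρ x * σ y / ‖x - y‖) hc.le]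
  field_simp

/-- For `c = Z^{1/3}` this is the paper's `ρ_Z`. -/
def scaleDensity (c : ℝ) (ρ : ℝ³ → ℝ) (x : ℝ³) : ℝ := c ^ 6 * ρ (c • x)

@[simp]
lemma scaleDensity_one (ρ : ℝ³ → ℝ) : scaleDensity 1 ρ = ρ := by
  ext x
  simp [scaleDensity]

lemma scaleDensity_scaleDensity (a b : ℝ) (ρ : ℝ³ → ℝ) :
    scaleDensity a (scaleDensity b ρ) = scaleDensity (b * a) ρ := by
  ext x
  simp only [scaleDensity, smul_smul]
  ring_nf

lemma TFAdmissible.scaleDensity {ρ : ℝ³ → ℝ} (h : TFAdmissible ρ) {c : ℝ} (hc : c ≠ 0) :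
    TFAdmissible (scaleDensity c ρ) := by
  obtain ⟨hnonneg, hint, hmemLp⟩ := h
  exact ⟨fun x => mul_nonneg (by positivity) (hnonneg _), (hint.comp_smul hc).const_mul _,
    (hmemLp.comp_smul hc).const_mul _⟩

lemma tfFunctional_scaleDensity (γ : ℝ) {c : ℝ} (hc : 0 < c) {ρ : ℝ³ → ℝ}
    (hρ : ∀ x, 0 ≤ ρ x) :
    tfFunctional γ (c ^ 3) (scaleDensity c ρ) = c ^ 7 * tfFunctional γ 1 ρ := by
  have hkinetic : (c ^ 6 : ℝ) ^ ((5 : ℝ) / 3) = c ^ 10 := by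
    rw [← Real.rpow_natCast, ← Real.rpow_mul hc.le]
    norm_num
  have hpoint : ∀ x : ℝ³,
      3 / 5 * γ * scaleDensity c ρ x ^ ((5 : ℝ) / 3) - c ^ 3 / ‖x‖ * scaleDensity c ρ x
        = c ^ 10 * (3 / 5 * γ * ρ (c • x) ^ ((5 : ℝ) / 3) - 1 / ‖c • x‖ * ρ (c • x)) := by
    intro x
    rw [scaleDensity, Real.mul_rpow (by positivity) (hρ _), hkinetic, norm_smul,
      Real.norm_of_nonneg hc.le]
    rcases eq_or_ne ‖x‖ 0 with hx | hx
    · simp only [hx, div_zero, zero_mul, sub_zero, mul_zero]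
      ring
    · field_simp
  have hcoulomb : coulombD (scaleDensity c ρ) (scaleDensity c ρ) = c ^ 7 * coulombD ρ ρ := by
    unfold scaleDensity
    rw [coulombD_const_mul (c ^ 6) (c ^ 6) (fun x => ρ (c • x)) (fun y => ρ (c • y)),
      coulombD_comp_smul hc]
    field_simp
  rw [tfFunctional, tfFunctional, funext hpoint, integral_const_mul,
    integral_comp_smul_euclideanSpace
      (f := fun y => 3 / 5 * γ * ρ y ^ ((5 : ℝ) / 3) - 1 / ‖y‖ * ρ y) hc.le, hcoulomb]
  field_simp

lemma tfFunctional_image_pow_three (γ : ℝ) {c : ℝ} (hc : 0 < c) :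
    tfFunctional γ (c ^ 3) '' {ρ | TFAdmissible ρ}
      = c ^ 7 • tfFunctional γ 1 '' {ρ | TFAdmissible ρ} := by
  simp only [← Set.image_smul, Set.image_image, smul_eq_mul]
  ext r
  constructor
  · rintro ⟨ρ, hρ, rfl⟩
    have hinv : scaleDensity c (scaleDensity c⁻¹ ρ) = ρ := by
      rw [scaleDensity_scaleDensity, inv_mul_cancel₀ hc.ne', scaleDensity_one]
    refine ⟨scaleDensity c⁻¹ ρ, hρ.scaleDensity (inv_ne_zero hc.ne'), ?_⟩
    dsimp only
    rw [← tfFunctional_scaleDensity γ hc (hρ.scaleDensity (inv_ne_zero hc.ne')).1, hinv]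
  · rintro ⟨ρ, hρ, rfl⟩
    exact ⟨scaleDensity c ρ, hρ.scaleDensity hc.ne', tfFunctional_scaleDensity γ hc hρ.1⟩

lemma tfEnergy_pow_three (γ : ℝ) {c : ℝ} (hc : 0 < c) :
    tfEnergy γ (c ^ 3) = c ^ 7 * tfEnergy γ 1 := by
  rw [tfEnergy, tfFunctional_image_pow_three γ hc, Real.sInf_smul_of_nonneg (by positivity),
    smul_eq_mul, tfEnergy]

theorem tf_energy_scaling_general (γ : ℝ) (Z : ℝ) (hZ : 0 < Z) :
    tfEnergy γ Z = tfEnergy γ 1 * Z ^ ((7 : ℝ) / 3) ∧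
    ∀ ρ : EuclideanSpace ℝ (Fin 3) → ℝ, TFAdmissible ρ →
      TFAdmissible (fun x => Z ^ 2 * ρ (Z ^ ((1 : ℝ) / 3) • x)) ∧
      tfFunctional γ Z (fun x => Z ^ 2 * ρ (Z ^ ((1 : ℝ) / 3) • x)) =
        Z ^ ((7 : ℝ) / 3) * tfFunctional γ 1 ρ := by
  obtain ⟨c, hc, rfl⟩ : ∃ c > 0, c ^ 3 = Z :=
    ⟨Z ^ ((1 : ℝ) / 3), by positivity, by
      rw [← Real.rpow_natCast, ← Real.rpow_mul hZ.le]; norm_num⟩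
  have hcube_rpow : ∀ r : ℝ, (c ^ 3) ^ r = c ^ (3 * r) := fun r => by
    rw [← Real.rpow_natCast, ← Real.rpow_mul hc.le, Nat.cast_ofNat]
  have hcube_root : (c ^ 3) ^ ((1 : ℝ) / 3) = c := by
    rw [hcube_rpow]; norm_num
  have hseven : (c ^ 3) ^ ((7 : ℝ) / 3) = c ^ 7 := by
    rw [hcube_rpow, ← Real.rpow_natCast]; norm_num
  have hsix : ((c ^ 3) ^ 2 : ℝ) = c ^ 6 := by ring
  simp only [hcube_root, hseven, hsix]
  exact ⟨by rw [tfEnergy_pow_three γ hc, mul_comm], fun ρ hρ =>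
    ⟨hρ.scaleDensity hc.ne', tfFunctional_scaleDensity γ hc hρ.1⟩⟩

/-- Scaling law for the Thomas–Fermi energy: `E_TF(Z) = E_TF(1)·Z^{7/3}`, and for any
admissible `ρ` at `Z = 1`, the scaled density `ρ_Z(x) = Z²ρ(Z^{1/3}x)` is admissible and
`𝓔_TF^Z(ρ_Z) = Z^{7/3} 𝓔_TF^1(ρ)`. -/
theorem tf_energy_scaling (γ : ℝ) (hγ : 0 < γ) (Z : ℝ) (hZ : 0 < Z) :
    tfEnergy γ Z = tfEnergy γ 1 * Z ^ ((7 : ℝ) / 3) ∧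
    ∀ ρ : EuclideanSpace ℝ (Fin 3) → ℝ, TFAdmissible ρ →
      TFAdmissible (fun x => Z ^ 2 * ρ (Z ^ ((1 : ℝ) / 3) • x)) ∧
      tfFunctional γ Z (fun x => Z ^ 2 * ρ (Z ^ ((1 : ℝ) / 3) • x)) =
        Z ^ ((7 : ℝ) / 3) * tfFunctional γ 1 ρ :=
  tf_energy_scaling_general γ Z hZ
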